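/- arXiv:1301.0292 — 3 statements merged into one kernel-verified Lean document; each statement's English description precedes it below -/
import Mathlib

section
/- Let G = Q:L be a biextraspecial group of rank m with L = ⟨s,t⟩, t an involution. Then R_t = C_Q(t) has order 2^(m+1). -/
/-- The centre of the subgroup `Q`, viewed as a subgroup of the ambient group `G`. -/
def centerOf (G : Type*) [Group G] (Q : Subgroup G) : Subgroup G :=
  Subgroup.centralizer (Q : Set G) ⊓ Q

open scoped commutatorElement

/-- A biextraspecial group of rank `m`: `G` is an extension of a special 2-group
`Q` of order `2^(2+2m)` by `L₂(2) ≅ S₃`, the centre `Z = Z(Q) ≅ 2²` is the natural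
module (elementary abelian of order 4 with faithful induced `G/Q`-action), `Q/Z` is
elementary abelian, and every element of order 3 acts fixed-point-freely on `Q`
(equivalently, `Q/Z` has only natural composition factors). -/
structure IsBiextraspecial (G : Type*) [Group G] (Q : Subgroup G) (m : ℕ) : Prop where
  normal : Q.Normal
  card_Q : Nat.card Q = 2 ^ (2 + 2 * m)
  quot_iso : Nonempty ((G ⧸ Q) ≃* Equiv.Perm (Fin 3))
  card_center : Nat.card (centerOf G Q) = 4
  center_exponent : ∀ z ∈ centerOf G Q, z * z = 1
  center_faithful : ∀ g : G, (∀ z ∈ centerOf G Q, g * z * g⁻¹ = z) → g ∈ Q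
  sq_mem_center : ∀ q ∈ Q, q * q ∈ centerOf G Q
  comm_mem_center : ∀ q ∈ Q, ∀ r ∈ Q, ⁅q, r⁆ ∈ centerOf G Q
  order_three_fpf : ∀ g : G, orderOf g = 3 → ∀ q ∈ Q, g * q * g⁻¹ = q → q = 1

/-- A dent: a normal subgroup `D` of `G` with `Z(Q) < D < Q` such that `D/Z` is an
irreducible `L`-submodule of `Q/Z` (i.e. `D` is minimal among normal subgroups
strictly containing `Z(Q)`). -/
structure IsDent (G : Type*) [Group G] (Q D : Subgroup G) : Prop where
  normal : D.Normal
  center_lt : centerOf G Q < D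
  lt_Q : D < Q
  minimal : ∀ E : Subgroup G, E.Normal → centerOf G Q < E → E ≤ D → E = D

/-- `D₃` is the diagonal dent of the distinct dents `D₁` and `D₂`: the unique third
dent contained in `D₁D₂`. -/
def IsDiagonal (G : Type*) [Group G] (Q D₁ D₂ D₃ : Subgroup G) : Prop :=
  IsDent G Q D₁ ∧ IsDent G Q D₂ ∧ IsDent G Q D₃ ∧
    D₁ ≠ D₂ ∧ D₃ ≠ D₁ ∧ D₃ ≠ D₂ ∧ D₃ ≤ D₁ ⊔ D₂

/-- Two subgroups commute elementwise, i.e. `[D₁, D₂] = 1`. -/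
def DentsCommute (G : Type*) [Group G] (D₁ D₂ : Subgroup G) : Prop :=
  ∀ d₁ ∈ D₁, ∀ d₂ ∈ D₂, d₁ * d₂ = d₂ * d₁

/-- A dent is singular when it is elementary abelian (of type `2⁴`). -/
def IsSingularDent (G : Type*) [Group G] (D : Subgroup G) : Prop :=
  ∀ d ∈ D, d * d = 1

/-- A standard basis `x, y` of a dent `D` with respect to `L = ⟨s, t⟩`:
`D = ⟨x, y, Z⟩` with `xᵗ = x`, `xˢ = y` and `yˢ = xy` (singular case) or
`yˢ = x⁻¹y⁻¹` (non-singular case). -/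
structure StdBasis (G : Type*) [Group G] (Q : Subgroup G) (s t : G)
    (D : Subgroup G) (x y : G) : Prop where
  x_mem : x ∈ D
  x_notin : x ∉ centerOf G Q
  gen : D = centerOf G Q ⊔ Subgroup.closure {x, y}
  t_fix : t * x * t⁻¹ = x
  s_x : s * x * s⁻¹ = y
  s_y : s * y * s⁻¹ = x * y ∨ s * y * s⁻¹ = x⁻¹ * y⁻¹

/-!
Conjugation by `t` and by an element `s ∈ L` of order 3 with `sᵗ = s⁻¹` acts on the elementary
abelian 2-groups `Z = Z(Q)` and `Q/Z`, with `s` fixed-point-free on both (on `Q/Z` because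
`z ↦ zˢz⁻¹` is a bijection of `Z`). On such a group `V` the map `v ↦ v·vᵗ` has kernel `C_V(t)`,
and its image is `C_V(t)` as well: `1 + s + s² = 0` gives `v = vˢ·(vˢ)ᵗ` for `v ∈ C_V(t)`.
Hence `|C_V(t)|² = |V|`, so `|C_Z(t)| = 2` and `|C_{Q/Z}(t)| = 2^m`. The image statement for `Z`
says that `H¹(⟨t⟩, Z)` vanishes, so every `t`-fixed coset of `Z` contains a `t`-fixed element and
`|C_Q(t)| = |C_Z(t)|·|C_{Q/Z}(t)| = 2^(m+1)`.
-/

namespace MulAut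

variable {P : Type*} [Group P]

def fixedSubgroup (e : MulAut P) : Subgroup P :=
  (e : P →* P).eqLocus (MonoidHom.id P)

@[simp]
theorem mem_fixedSubgroup {e : MulAut P} {p : P} : p ∈ e.fixedSubgroup ↔ e p = p :=
  Iff.rfl

def quotient (N : Subgroup P) [N.Characteristic] : MulAut P →* MulAut (P ⧸ N) where
  toFun e := QuotientGroup.congr N N e (Subgroup.characteristic_iff_map_eq.mp ‹_› e)
  map_one' := by
    ext x
    induction x using QuotientGroup.induction_on
    rfl
  map_mul' _ _ := by
    ext x
    induction x using QuotientGroup.induction_on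
    rfl

@[simp]
theorem quotient_apply_mk (N : Subgroup P) [N.Characteristic] (e : MulAut P) (p : P) :
    quotient N e (p : P ⧸ N) = (e p : P ⧸ N) :=
  rfl

theorem fixedSubgroup_characteristic_eq_bot (N : Subgroup P) [N.Characteristic] {e : MulAut P}
    (he : e.fixedSubgroup = ⊥) : (characteristic N e).fixedSubgroup = ⊥ := by
  rw [eq_bot_iff] at he ⊢
  intro n hn
  have : (n : P) ∈ e.fixedSubgroup := congrArg Subtype.val (mem_fixedSubgroup.mp hn)
  exact Subtype.ext (he this)

theorem card_fixedSubgroup_eq_mul_card_quotient (N : Subgroup P) [N.Characteristic]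
    {τ : MulAut P} (hτ : τ ^ 2 = 1)
    (hN : ∀ n : N, characteristic N τ n = n⁻¹ → ∃ w : N, w * (characteristic N τ w)⁻¹ = n) :
    Nat.card τ.fixedSubgroup =
      Nat.card (characteristic N τ).fixedSubgroup * Nat.card (quotient N τ).fixedSubgroup := by
  have hττ (p : P) : τ (τ p) = p := by
    rw [← mul_apply, ← pow_two, hτ, one_apply]
  let φ : τ.fixedSubgroup →* P ⧸ N := (QuotientGroup.mk' N).comp τ.fixedSubgroup.subtype
  have hker : (characteristic N τ).fixedSubgroup ≃ φ.ker :=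
    { toFun n := ⟨⟨n, congrArg Subtype.val n.2⟩, by simp [φ]⟩
      invFun x := ⟨⟨x, QuotientGroup.eq_one_iff _ |>.mp x.2⟩, Subtype.ext x.1.2⟩
      left_inv _ := rfl
      right_inv _ := rfl }
  have hrange : φ.range = (quotient N τ).fixedSubgroup := by
    ext x
    induction x using QuotientGroup.induction_on with | H p => ?_
    constructor
    · rintro ⟨q, hq⟩
      rw [← hq]
      simpa [φ] using congrArg ((↑) : P → P ⧸ N) q.2
    · intro hp
      have hpN : p⁻¹ * τ p ∈ N := QuotientGroup.eq.mp (mem_fixedSubgroup.mp hp).symm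
      obtain ⟨w, hw⟩ := hN ⟨_, hpN⟩ (Subtype.ext (by simp [hττ]))
      have hw' : τ w = (p⁻¹ * τ p)⁻¹ * w := by
        rw [eq_inv_mul_iff_mul_eq, ← eq_mul_inv_iff_mul_eq]
        simpa [Subtype.ext_iff] using hw.symm
      refine ⟨⟨p * w, ?_⟩, ?_⟩
      · rw [mem_fixedSubgroup, map_mul, hw']
        group
      · simp [φ]
  rw [Nat.card_congr hker, ← hrange, ← Subgroup.index_ker, Subgroup.card_mul_index]

section Commutative

open scoped IsMulCommutative

theorem fixedSubgroup_quotient_eq_bot (N : Subgroup P) [N.Characteristic] [IsMulCommutative N]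
    [Finite N] {e : MulAut P} (he : e.fixedSubgroup = ⊥) : (quotient N e).fixedSubgroup = ⊥ := by
  let δ : N →* N := (characteristic N e : N →* N) / MonoidHom.id N
  have hδ : Function.Surjective δ := by
    refine Finite.injective_iff_surjective.mp ((injective_iff_map_eq_one δ).mpr fun w hw => ?_)
    have : w ∈ (characteristic N e).fixedSubgroup := by simpa [δ, div_eq_one] using hw
    simpa [fixedSubgroup_characteristic_eq_bot N he] using this
  rw [eq_bot_iff]
  intro x hx
  induction x using QuotientGroup.induction_on with | H p => ?_
  obtain ⟨w, hw⟩ := hδ ⟨_, QuotientGroup.eq.mp ((mem_fixedSubgroup.mp hx))⟩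
  have hw' : e w = (e p)⁻¹ * p * w := by
    rw [← div_eq_iff_eq_mul]
    simpa [δ, Subtype.ext_iff] using hw
  have hpw : p * w ∈ e.fixedSubgroup := by
    rw [mem_fixedSubgroup, map_mul, hw']
    group
  rw [he, Subgroup.mem_bot, mul_eq_one_iff_eq_inv] at hpw
  rw [Subgroup.mem_bot, QuotientGroup.eq_one_iff, hpw]
  exact inv_mem w.2

variable {A V : Type*} [Group A] [Group V] [IsMulCommutative V]

theorem ker_id_mul_eq_fixedSubgroup (hV : ∀ v : V, v * v = 1) (τ : MulAut V) :
    (MonoidHom.id V * (τ : V →* V)).ker = τ.fixedSubgroup := by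
  ext v
  rw [MonoidHom.mem_ker, MonoidHom.mul_apply, MonoidHom.id_apply, mul_eq_one_iff_inv_eq,
    inv_eq_of_mul_eq_one_right (hV v), eq_comm]
  rfl

theorem range_id_mul_eq_fixedSubgroup (hV : ∀ v : V, v * v = 1) (ρ : A →* MulAut V) {s t : A}
    (hs : s ^ 3 = 1) (ht : t ^ 2 = 1) (hts : t * s * t⁻¹ = s⁻¹) (hfix : (ρ s).fixedSubgroup = ⊥) :
    (MonoidHom.id V * (ρ t : V →* V)).range = (ρ t).fixedSubgroup := by
  have hρ (a b : A) (v : V) : ρ a (ρ b v) = ρ (a * b) v := by simp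
  have hσ3 (v : V) : ρ s (ρ s (ρ s v)) = v := by
    rw [hρ, hρ, ← pow_three', hs, map_one, one_apply]
  have hττ (v : V) : ρ t (ρ t v) = v := by rw [hρ, ← pow_two, ht, map_one, one_apply]
  have hτσ (v : V) : ρ t (ρ s v) = ρ s (ρ s (ρ t v)) := by
    have hsinv : s⁻¹ = s * s := inv_eq_of_mul_eq_one_right ((pow_three s).symm.trans hs)
    rw [hρ, hρ, hρ, ← hsinv, ← hts, inv_mul_cancel_right]
  apply le_antisymm
  · rintro _ ⟨w, rfl⟩
    simp [hττ, mul_comm]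
  · intro v hv
    rw [mem_fixedSubgroup] at hv
    have hnorm : v * ρ s v * ρ s (ρ s v) = 1 := by
      rw [← Subgroup.mem_bot, ← hfix, mem_fixedSubgroup, map_mul, map_mul, hσ3, mul_comm,
        mul_assoc]
    refine ⟨ρ s v, ?_⟩
    show ρ s v * ρ t (ρ s v) = v
    rw [hτσ, hv, ← mul_inv_eq_one, inv_eq_of_mul_eq_one_right (hV v), ← hnorm, mul_comm, mul_assoc]

theorem card_fixedSubgroup_mul_self (hV : ∀ v : V, v * v = 1) (ρ : A →* MulAut V) {s t : A}
    (hs : s ^ 3 = 1) (ht : t ^ 2 = 1) (hts : t * s * t⁻¹ = s⁻¹) (hfix : (ρ s).fixedSubgroup = ⊥) :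
    Nat.card (ρ t).fixedSubgroup * Nat.card (ρ t).fixedSubgroup = Nat.card V := by
  have hker := ker_id_mul_eq_fixedSubgroup hV (ρ t)
  have hrange := range_id_mul_eq_fixedSubgroup hV ρ hs ht hts hfix
  rw [← Subgroup.card_mul_index (MonoidHom.id V * (ρ t : V →* V)).ker, Subgroup.index_ker, hker,
    hrange]

end Commutative

end MulAut

theorem Equiv.Perm.fin_three_exists_conj_eq_inv :
    ∀ a : Equiv.Perm (Fin 3), a ^ 2 = 1 → a ≠ 1 → ∃ b, b ^ 3 = 1 ∧ b ≠ 1 ∧ a * b * a⁻¹ = b⁻¹ := by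
  decide

theorem exists_orderOf_eq_three_conj_eq_inv_of_mulEquiv {H : Type*} [Group H]
    (e : H ≃* Equiv.Perm (Fin 3)) {a : H} (ha : orderOf a = 2) :
    ∃ b : H, orderOf b = 3 ∧ a * b * a⁻¹ = b⁻¹ := by
  have hea : orderOf (e a) = 2 := by rw [MulEquiv.orderOf_eq, ha]
  obtain ⟨b, hb3, hb1, hab⟩ := Equiv.Perm.fin_three_exists_conj_eq_inv (e a)
    (hea ▸ pow_orderOf_eq_one _) (by rintro h; simp [h] at hea)
  refine ⟨e.symm b, ?_, e.injective ?_⟩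
  · rw [MulEquiv.orderOf_eq, orderOf_eq_prime hb3 hb1]
  · simpa using hab

section Biextraspecial

open Subgroup

variable {G : Type*} [Group G] {Q : Subgroup G} {m : ℕ}

theorem subgroupOf_centerOf (Q : Subgroup G) : (centerOf G Q).subgroupOf Q = center Q := by
  ext q
  simp [centerOf, mem_subgroupOf, mem_center_iff, mem_centralizer_iff, Subtype.ext_iff]

theorem mem_center_iff_mem_centerOf {q : Q} : q ∈ center Q ↔ (q : G) ∈ centerOf G Q := by
  rw [← subgroupOf_centerOf, mem_subgroupOf]

theorem card_centralizer_inf_eq_card_fixedSubgroup [Q.Normal] (t : G) :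
    Nat.card (centralizer {t} ⊓ Q : Subgroup G) =
      Nat.card (MulAut.conjNormal t : MulAut Q).fixedSubgroup := by
  have : (MulAut.conjNormal t : MulAut Q).fixedSubgroup = (centralizer {t} ⊓ Q).subgroupOf Q := by
    ext q
    rw [MulAut.mem_fixedSubgroup, Subtype.ext_iff, MulAut.conjNormal_apply, mem_subgroupOf, mem_inf,
      mem_centralizer_singleton_iff, mul_inv_eq_iff_eq_mul]
    exact ⟨fun h => ⟨h.symm, q.2⟩, fun h => h.1.symm⟩
  rw [this, Nat.card_congr (subgroupOfEquivOfLe inf_le_right).toEquiv]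

namespace IsBiextraspecial

variable (hG : IsBiextraspecial G Q m)
include hG

theorem card_center_eq_four : Nat.card (center Q) = 4 := by
  rw [← subgroupOf_centerOf]
  exact (Nat.card_congr (subgroupOfEquivOfLe inf_le_right).toEquiv).trans hG.card_center

theorem mul_self_eq_one_of_center (z : center Q) : z * z = 1 :=
  Subtype.ext (Subtype.ext (hG.center_exponent _ (mem_center_iff_mem_centerOf.mp z.2)))

theorem isMulCommutative_quotient_center : IsMulCommutative (Q ⧸ center Q) := by
  refine ⟨⟨fun x y => ?_⟩⟩
  induction x using QuotientGroup.induction_on with | H q => ?_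
  induction y using QuotientGroup.induction_on with | H r => ?_
  rw [← QuotientGroup.mk_mul, ← QuotientGroup.mk_mul, QuotientGroup.eq, mem_center_iff_mem_centerOf]
  convert hG.comm_mem_center _ (inv_mem r.2) _ (inv_mem q.2) using 1
  simp [commutatorElement_def, mul_assoc]

theorem mul_self_eq_one_of_quotient_center (x : Q ⧸ center Q) : x * x = 1 := by
  induction x using QuotientGroup.induction_on with | H q => ?_
  rw [← QuotientGroup.mk_mul, QuotientGroup.eq_one_iff, mem_center_iff_mem_centerOf]
  exact hG.sq_mem_center q q.2

theorem card_quotient_center : Nat.card (Q ⧸ center Q) = 2 ^ m * 2 ^ m := by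
  have h := card_eq_card_quotient_mul_card_subgroup (center Q)
  rw [hG.card_Q, hG.card_center_eq_four] at h
  refine Nat.eq_of_mul_eq_mul_right (by norm_num : 0 < 4) (h.symm.trans ?_)
  ring

theorem fixedSubgroup_conjNormal_eq_bot [Q.Normal] {s : G} (hs : orderOf s = 3) :
    (MulAut.conjNormal s : MulAut Q).fixedSubgroup = ⊥ := by
  rw [eq_bot_iff]
  intro q hq
  exact Subtype.ext (hG.order_three_fpf s hs q q.2 (by simpa [Subtype.ext_iff] using hq))

theorem exists_orderOf_eq_three_conj_eq_inv {L : Subgroup G} (hL : Q.IsComplement' L) {t : G}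
    (ht : t ∈ L) (hot : orderOf t = 2) : ∃ s : G, orderOf s = 3 ∧ t * s * t⁻¹ = s⁻¹ := by
  have := hG.normal
  obtain ⟨e⟩ := hG.quot_iso
  obtain ⟨s, hs, hts⟩ := exists_orderOf_eq_three_conj_eq_inv_of_mulEquiv
    (hL.symm.QuotientMulEquiv.symm.trans e) (a := ⟨t, ht⟩) (by rwa [← orderOf_coe])
  exact ⟨s, by rwa [orderOf_coe], by simpa [Subtype.ext_iff] using hts⟩

end IsBiextraspecial

end Biextraspecial

/-- for an involution `t` of the complement `L`, the centraliser
`R_t = C_Q(t)` has order `2^(m+1)`. -/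
theorem stmt9 (G : Type*) [Group G] (Q L : Subgroup G) (m : ℕ)
    (hG : IsBiextraspecial G Q m) (hL : Q.IsComplement' L)
    (t : G) (ht : t ∈ L) (hot : orderOf t = 2) :
    Nat.card (Subgroup.centralizer {t} ⊓ Q : Subgroup G) = 2 ^ (m + 1) := by
  have := hG.normal
  have := hG.isMulCommutative_quotient_center
  have : Finite (Subgroup.center Q) := Nat.finite_of_card_ne_zero (by simp [hG.card_center_eq_four])
  obtain ⟨s, hs, hts⟩ := hG.exists_orderOf_eq_three_conj_eq_inv hL ht hot
  have hs3 : s ^ 3 = 1 := hs ▸ pow_orderOf_eq_one s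
  have ht2 : t ^ 2 = 1 := hot ▸ pow_orderOf_eq_one t
  have hfix := hG.fixedSubgroup_conjNormal_eq_bot hs
  set N := Subgroup.center Q
  let ρN := (MulAut.characteristic N).comp (MulAut.conjNormal : G →* MulAut Q)
  let ρV := (MulAut.quotient N).comp (MulAut.conjNormal : G →* MulAut Q)
  have hN := MulAut.card_fixedSubgroup_mul_self hG.mul_self_eq_one_of_center ρN hs3 ht2 hts
    (MulAut.fixedSubgroup_characteristic_eq_bot N hfix)
  have hV := MulAut.card_fixedSubgroup_mul_self hG.mul_self_eq_one_of_quotient_center ρV hs3 ht2 hts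
    (MulAut.fixedSubgroup_quotient_eq_bot N hfix)
  rw [hG.card_center_eq_four, show 4 = 2 * 2 from rfl, Nat.mul_self_inj] at hN
  rw [hG.card_quotient_center, Nat.mul_self_inj] at hV
  have hlift (n : N) (hn : ρN t n = n⁻¹) : ∃ w : N, w * (ρN t w)⁻¹ = n := by
    rw [inv_eq_of_mul_eq_one_right (hG.mul_self_eq_one_of_center n), ← MulAut.mem_fixedSubgroup,
      ← MulAut.range_id_mul_eq_fixedSubgroup hG.mul_self_eq_one_of_center ρN hs3 ht2 hts
        (MulAut.fixedSubgroup_characteristic_eq_bot N hfix)] at hn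
    obtain ⟨w, hw⟩ := hn
    exact ⟨w, by rwa [inv_eq_of_mul_eq_one_right (hG.mul_self_eq_one_of_center _)]⟩
  rw [card_centralizer_inf_eq_card_fixedSubgroup,
    MulAut.card_fixedSubgroup_eq_mul_card_quotient N (by rw [← map_pow, ht2, map_one]) hlift]
  exact (congrArg₂ (· * ·) hN hV).trans (pow_succ' 2 m).symm
end

section
/- Let G = Q:L be a biextraspecial group, t ∈ L an involution, and D = ⟨x,y,Z⟩ a dent with standard basis (so xᵗ = x). Then D ∩ C_Q(t) has order 4; it is isomorphic to 2² (generated by a and x) if D is singular, and cyclic of order 4 (generated by x) if D is non-singular. -/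
open scoped commutatorElement

/-! Modulo `Z = Z(Q)` the dent `D` is the Klein four-group `{1, x̄, ȳ, x̄ȳ}`, since squares and
commutators of `Q` lie in `Z`. In `L ≅ S₃` the involution `t` inverts `s`, so
`yᵗ = x^{st} = x^{s⁻¹} = yˢ ≡ xy`: `t` fixes `x̄` and swaps `ȳ` and `x̄ȳ`, whence
`D ∩ C_Q(t) ⊆ Z ∪ xZ`. As `t` acts nontrivially on `Z ≅ 2²`, its fixed points there form a
proper subgroup, namely `{1, a}`; this gives `D ∩ C_Q(t) = {1, a, x, xa}`.

Finally `x² ∈ C_Z(t) = {1, a}`. If `x² = 1`, then `y² = 1` and `[x, y] = 1`, the latter because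
`s` fixes the central commutator `[x, y]` and acts fixed-point-freely on `Q`; so `D` is
elementary abelian. Hence `x² = a` when `D` is non-singular, and then `⟨a, x⟩ = ⟨x⟩`. -/

theorem Equiv.Perm.fin_three_conj_eq_inv :
    ∀ σ τ : Equiv.Perm (Fin 3), σ ≠ 1 → τ ≠ 1 → σ ^ 3 = 1 → τ ^ 2 = 1 → τ * σ * τ⁻¹ = σ⁻¹ := by
  decide

section GroupLemmas

variable {G : Type*} [Group G]

theorem Subgroup.mem_centralizer_singleton_iff_conj_eq {g k : G} :
    k ∈ Subgroup.centralizer {g} ↔ g * k * g⁻¹ = k := by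
  rw [Subgroup.mem_centralizer_singleton_iff, mul_inv_eq_iff_eq_mul, eq_comm]

theorem conj_conj_eq_of_conj_eq_inv {s t x : G} (hts : t * s * t⁻¹ = s⁻¹) (hs : s ^ 3 = 1)
    (htx : t * x * t⁻¹ = x) : t * (s * x * s⁻¹) * t⁻¹ = s * (s * x * s⁻¹) * s⁻¹ := by
  have hs2 : s ^ 2 = s⁻¹ := eq_inv_of_mul_eq_one_left (by rw [← pow_succ, hs])
  calc t * (s * x * s⁻¹) * t⁻¹ = (t * s * t⁻¹) * (t * x * t⁻¹) * (t * s * t⁻¹)⁻¹ := by group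
    _ = s ^ 2 * x * (s ^ 2)⁻¹ := by rw [hts, htx, hs2]
    _ = s * (s * x * s⁻¹) * s⁻¹ := by rw [pow_two]; group

theorem Subgroup.IsComplement'.conj_eq_inv_of_quotient_perm_three {Q L : Subgroup G} [Q.Normal]
    (hL : Q.IsComplement' L) (e : G ⧸ Q ≃* Equiv.Perm (Fin 3)) {s t : G} (hs : s ∈ L)
    (ht : t ∈ L) (hos : orderOf s = 3) (hot : orderOf t = 2) : t * s * t⁻¹ = s⁻¹ := by
  let φ : G →* Equiv.Perm (Fin 3) := e.toMonoidHom.comp (QuotientGroup.mk' Q)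
  have hφ : ∀ g, φ g = 1 ↔ g ∈ Q := fun g => by simp [φ, QuotientGroup.eq_one_iff]
  have hLQ : ∀ g ∈ L, g ∈ Q → g = 1 := fun g hgL hgQ =>
    Subgroup.disjoint_def.mp hL.disjoint hgQ hgL
  have hφs : φ s ≠ 1 := fun h => by simp [hLQ s hs ((hφ s).mp h)] at hos
  have hφt : φ t ≠ 1 := fun h => by simp [hLQ t ht ((hφ t).mp h)] at hot
  have hs3 : s ^ 3 = 1 := hos ▸ pow_orderOf_eq_one s
  have ht2 : t ^ 2 = 1 := hot ▸ pow_orderOf_eq_one t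
  have key := Equiv.Perm.fin_three_conj_eq_inv (φ s) (φ t) hφs hφt
    (by rw [← map_pow, hs3, map_one]) (by rw [← map_pow, ht2, map_one])
  have hQ : t * s * t⁻¹ * s ∈ Q := (hφ _).mp (by simp only [map_mul, map_inv, key, inv_mul_cancel])
  have hL' : t * s * t⁻¹ * s ∈ L := mul_mem (mul_mem (mul_mem ht hs) (inv_mem ht)) hs
  exact eq_inv_of_mul_eq_one_left (hLQ _ hL' hQ)

theorem Subgroup.eq_one_or_eq_of_lt_of_card_eq_four {H K : Subgroup G} (hHK : H < K)
    (hK : Nat.card K = 4) {a z : G} (ha : a ∈ H) (ha1 : a ≠ 1) (hz : z ∈ H) :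
    z = 1 ∨ z = a := by
  have : Finite K := Nat.finite_of_card_ne_zero (by omega)
  have hdvd : Nat.card H ∣ 4 := hK ▸ Subgroup.card_dvd_of_le hHK.le
  have hlt : Nat.card H < 4 := by
    by_contra! h
    exact hHK.ne (Subgroup.eq_of_le_of_card_ge hHK.le (by omega))
  have hne1 : Nat.card H ≠ 1 := fun h =>
    ha1 (by simpa using (Subgroup.card_eq_one.mp h ▸ ha : a ∈ (⊥ : Subgroup G)))
  have hcard : Nat.card H = 2 := by
    have := Nat.le_of_dvd (by norm_num) hdvd
    interval_cases h : Nat.card H <;> simp_all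
  obtain ⟨y, -, hy⟩ := (Nat.card_eq_two_iff' (1 : H)).mp hcard
  by_contra! hza
  have hay : (⟨a, ha⟩ : H) = y := hy _ (by simpa using ha1)
  have hzy : (⟨z, hz⟩ : H) = y := hy _ (by simpa using hza.1)
  exact hza.2 (congrArg Subtype.val (hzy.trans hay.symm))

theorem Subgroup.mem_closure_pair_of_commute {u v g : G} (hu : u * u = 1) (hv : v * v = 1)
    (huv : Commute u v) (hg : g ∈ Subgroup.closure {u, v}) :
    g = 1 ∨ g = u ∨ g = v ∨ g = u * v := by
  have hu' : ∀ w, u * (u * w) = w := fun w => by rw [← mul_assoc, hu, one_mul]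
  have hvu : v * u = u * v := huv.symm.eq
  have hvu' : ∀ w, v * (u * w) = u * (v * w) := fun w => huv.symm.left_comm w
  induction hg using Subgroup.closure_induction with
  | mem g hg => rcases hg with rfl | rfl <;> simp
  | one => left; rfl
  | mul g h _ _ hg hh =>
    rcases hg with rfl | rfl | rfl | rfl <;> rcases hh with rfl | rfl | rfl | rfl <;>
      simp [mul_assoc, hu, hv, hu', hvu, hvu']
  | inv g _ hg =>
    rcases hg with rfl | rfl | rfl | rfl <;>
      simp [inv_eq_of_mul_eq_one_left hu, inv_eq_of_mul_eq_one_left hv, hvu]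

theorem Subgroup.mul_self_eq_one_of_mem_closure {S : Set G}
    (hcomm : ∀ u ∈ S, ∀ v ∈ S, u * v = v * u) (hsq : ∀ u ∈ S, u * u = 1) {g : G}
    (hg : g ∈ Subgroup.closure S) : g * g = 1 := by
  have := Subgroup.isMulCommutative_closure hcomm
  induction hg using Subgroup.closure_induction with
  | mem g hg => exact hsq g hg
  | one => exact mul_one 1
  | mul g h hgS hhS hg hh =>
    rw [mul_assoc, ← mul_assoc h, setLike_mul_comm hhS hgS, mul_assoc, ← mul_assoc, hg, hh,
      one_mul]
  | inv g _ hg => rw [← mul_inv_rev, hg, inv_one]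

theorem Subgroup.closure_mul_self_pair (g : G) :
    Subgroup.closure {g * g, g} = Subgroup.closure {g} := by
  have hg := Subgroup.mem_closure_singleton_self g
  refine le_antisymm ((Subgroup.closure_le _).mpr ?_) (Subgroup.closure_mono (by simp))
  exact Set.insert_subset_iff.mpr ⟨mul_mem hg hg, Set.singleton_subset_iff.mpr hg⟩

theorem Subgroup.ncard_one_pair_mul_eq_four {H : Subgroup G} {a x : G} (ha : a ∈ H) (ha1 : a ≠ 1)
    (hx : x ∉ H) : ({1, a, x, x * a} : Set G).ncard = 4 := by
  refine Set.ncard_eq_four.mpr ⟨1, a, x, x * a, ha1.symm, ?_, ?_, ?_, ?_, ?_, rfl⟩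
  · exact fun h => hx (h ▸ one_mem _)
  · exact fun h => hx (eq_inv_of_mul_eq_one_left h.symm ▸ inv_mem ha)
  · exact fun h => hx (h ▸ ha)
  · simpa using fun h : x = 1 => hx (h ▸ one_mem _)
  · simpa using ha1

theorem Subgroup.eq_closure_pair_of_coe_eq {K : Subgroup G} {a x : G}
    (hK : (K : Set G) = {1, a, x, x * a}) : K = Subgroup.closure {a, x} := by
  have ha : a ∈ Subgroup.closure {a, x} := Subgroup.subset_closure (by simp)
  have hx : x ∈ Subgroup.closure {a, x} := Subgroup.subset_closure (by simp)
  refine le_antisymm (fun d hd => ?_) ((Subgroup.closure_le _).mpr ?_)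
  · rw [← SetLike.mem_coe, hK] at hd
    rcases hd with rfl | rfl | rfl | rfl
    exacts [one_mem _, ha, hx, mul_mem hx ha]
  · rw [hK]
    simp [Set.insert_subset_iff]

end GroupLemmas

section CenterOf

variable {G : Type*} [Group G] {Q : Subgroup G}

theorem commute_of_mem_centerOf {z q : G} (hz : z ∈ centerOf G Q) (hq : q ∈ Q) :
    Commute z q :=
  ((Subgroup.mem_centralizer_iff.mp hz.1) q hq).symm

instance centerOf.normal [Q.Normal] : (centerOf G Q).Normal := by
  unfold centerOf
  infer_instance

theorem StdBasis.y_mem {s t : G} {D : Subgroup G} {x y : G} (hB : StdBasis G Q s t D x y) :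
    y ∈ D :=
  hB.gen ▸ Subgroup.mem_sup_right (Subgroup.subset_closure (by simp))

end CenterOf

namespace IsBiextraspecial

variable {G : Type*} [Group G] {Q : Subgroup G} {m : ℕ}

theorem eq_one_or_eq_of_conj_eq_self (hG : IsBiextraspecial G Q m) {t a z : G} (htQ : t ∉ Q)
    (ha : a ∈ centerOf G Q) (ha1 : a ≠ 1) (hta : t * a * t⁻¹ = a) (hz : z ∈ centerOf G Q)
    (htz : t * z * t⁻¹ = z) : z = 1 ∨ z = a := by
  have hlt : centerOf G Q ⊓ Subgroup.centralizer {t} < centerOf G Q := by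
    refine inf_le_left.lt_of_ne fun h => htQ (hG.center_faithful t fun w hw => ?_)
    exact Subgroup.mem_centralizer_singleton_iff_conj_eq.mp (h.ge hw).2
  exact Subgroup.eq_one_or_eq_of_lt_of_card_eq_four hlt hG.card_center
    ⟨ha, Subgroup.mem_centralizer_singleton_iff_conj_eq.mpr hta⟩ ha1
    ⟨hz, Subgroup.mem_centralizer_singleton_iff_conj_eq.mpr htz⟩

theorem commute_of_stdBasis (hG : IsBiextraspecial G Q m) {s t : G} {D : Subgroup G} {x y : G}
    (hos : orderOf s = 3) (hDQ : D ≤ Q) (hB : StdBasis G Q s t D x y) : Commute x y := by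
  have hxQ := hDQ hB.x_mem
  have hc : ⁅x, y⁆ ∈ centerOf G Q := hG.comm_mem_center x hxQ y (hDQ hB.y_mem)
  have hsc : s * ⁅x, y⁆ * s⁻¹ = ⁅y, s * y * s⁻¹⁆ := by
    rw [← hB.s_x, commutatorElement_def, commutatorElement_def]
    group
  have hfix : s * ⁅x, y⁆ * s⁻¹ = ⁅x, y⁆ := by
    rw [hsc]
    rcases hB.s_y with h | h <;> rw [h]
    · calc ⁅y, x * y⁆ = ⁅x, y⁆⁻¹ := by simp only [commutatorElement_def]; group
        _ = ⁅x, y⁆ := inv_eq_of_mul_eq_one_left (hG.center_exponent _ hc)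
    · calc ⁅y, x⁻¹ * y⁻¹⁆ = x⁻¹ * (⁅x, y⁆ * x) := by simp only [commutatorElement_def]; group
        _ = ⁅x, y⁆ := by rw [(commute_of_mem_centerOf hc hxQ).eq, inv_mul_cancel_left]
  exact commutatorElement_eq_one_iff_mul_comm.mp
    (hG.order_three_fpf s hos _ hc.2 hfix)

theorem isSingularDent_of_mul_self_eq_one (hG : IsBiextraspecial G Q m) {s t : G}
    {D : Subgroup G} {x y : G} (hos : orderOf s = 3) (hDQ : D ≤ Q) (hB : StdBasis G Q s t D x y)
    (hx : x * x = 1) : IsSingularDent G D := by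
  have hy : y * y = 1 := by
    rw [← hB.s_x, show s * x * s⁻¹ * (s * x * s⁻¹) = s * (x * x) * s⁻¹ by group, hx,
      mul_one, mul_inv_cancel]
  have hxy := hG.commute_of_stdBasis hos hDQ hB
  have hxQ := hDQ hB.x_mem
  have hyQ := hDQ hB.y_mem
  intro d hd
  rw [hB.gen, ← Subgroup.closure_eq (centerOf G Q), ← Subgroup.closure_union] at hd
  refine Subgroup.mul_self_eq_one_of_mem_closure ?_ ?_ hd
  · rintro u (hu | rfl | rfl) v hv
    · refine (commute_of_mem_centerOf hu ?_).eq
      rcases hv with hv | rfl | rfl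
      exacts [hv.2, hxQ, hyQ]
    · rcases hv with hv | rfl | rfl
      exacts [(commute_of_mem_centerOf hv hxQ).eq.symm, rfl, hxy.eq]
    · rcases hv with hv | rfl | rfl
      exacts [(commute_of_mem_centerOf hv hyQ).eq.symm, hxy.eq.symm, rfl]
  · rintro u (hu | rfl | rfl)
    exacts [hG.center_exponent u hu, hx, hy]

section Quotient

variable [Q.Normal]

theorem mk_mul_self (hG : IsBiextraspecial G Q m) {q : G} (hq : q ∈ Q) :
    (q : G ⧸ centerOf G Q) * q = 1 := by
  rw [← QuotientGroup.mk_mul, QuotientGroup.eq_one_iff]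
  exact hG.sq_mem_center q hq

theorem mk_commute (hG : IsBiextraspecial G Q m) {q r : G} (hq : q ∈ Q) (hr : r ∈ Q) :
    Commute (q : G ⧸ centerOf G Q) r := by
  rw [← commutatorElement_eq_one_iff_commute]
  change ⁅QuotientGroup.mk' _ q, QuotientGroup.mk' _ r⁆ = 1
  rw [← map_commutatorElement, QuotientGroup.mk'_apply, QuotientGroup.eq_one_iff]
  exact hG.comm_mem_center q hq r hr

theorem mk_conj_eq_mul (hG : IsBiextraspecial G Q m) {s t : G} {D : Subgroup G} {x y : G}
    (hDQ : D ≤ Q) (hB : StdBasis G Q s t D x y) (hts : t * s * t⁻¹ = s⁻¹) (hs : s ^ 3 = 1) :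
    ((t * y * t⁻¹ : G) : G ⧸ centerOf G Q) = x * y := by
  rw [← hB.s_x, conj_conj_eq_of_conj_eq_inv hts hs hB.t_fix, hB.s_x]
  rcases hB.s_y with h | h <;> rw [h, QuotientGroup.mk_mul]
  have hx := inv_eq_of_mul_eq_one_left (hG.mk_mul_self (hDQ hB.x_mem))
  have hy := inv_eq_of_mul_eq_one_left (hG.mk_mul_self (hDQ hB.y_mem))
  rw [QuotientGroup.mk_inv, QuotientGroup.mk_inv, hx, hy]

theorem mk_eq_one_or_eq_of_conj_eq_self (hG : IsBiextraspecial G Q m) {s t : G}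
    {D : Subgroup G} {x y : G} (hDQ : D ≤ Q) (hB : StdBasis G Q s t D x y)
    (hty : ((t * y * t⁻¹ : G) : G ⧸ centerOf G Q) = x * y) {d : G} (hd : d ∈ D)
    (htd : t * d * t⁻¹ = d) :
    (d : G ⧸ centerOf G Q) = 1 ∨ (d : G ⧸ centerOf G Q) = x := by
  set π := QuotientGroup.mk' (centerOf G Q)
  have hmap : D.map π = Subgroup.closure {π x, π y} := by
    rw [hB.gen, Subgroup.map_sup, QuotientGroup.map_mk'_self, bot_sup_eq,
      MonoidHom.map_closure, Set.image_pair]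
  have hxx : π x * π x = 1 := hG.mk_mul_self (hDQ hB.x_mem)
  have hx1 : π x ≠ 1 := by
    rw [QuotientGroup.mk'_apply, Ne, QuotientGroup.eq_one_iff]
    exact hB.x_notin
  have hconj : ∀ g, π (t * g * t⁻¹) = π t * π g * (π t)⁻¹ := by simp
  have htx' : π t * π x * (π t)⁻¹ = π x := by rw [← hconj, hB.t_fix]
  have hty' : π t * π y * (π t)⁻¹ = π x * π y := by rw [← hconj]; exact hty
  have htd' : π t * π d * (π t)⁻¹ = π d := by rw [← hconj, htd]
  have hyy : π y * π y = 1 := hG.mk_mul_self (hDQ hB.y_mem)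
  have hxy : Commute (π x) (π y) := hG.mk_commute (hDQ hB.x_mem) (hDQ hB.y_mem)
  rcases Subgroup.mem_closure_pair_of_commute hxx hyy hxy
    (hmap ▸ Subgroup.mem_map_of_mem π hd) with h | h | h | h
  · exact Or.inl h
  · exact Or.inr h
  · rw [h, hty'] at htd'
    exact absurd (mul_eq_right.mp htd') hx1
  · rw [h, show π t * (π x * π y) * (π t)⁻¹ =
      (π t * π x * (π t)⁻¹) * (π t * π y * (π t)⁻¹) by group, htx', hty', ← mul_assoc, hxx,
      one_mul] at htd'
    exact absurd (mul_eq_right.mp htd'.symm) hx1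

end Quotient

theorem eq_of_mem_dent_of_conj_eq_self [Q.Normal] (hG : IsBiextraspecial G Q m) {s t : G}
    {D : Subgroup G} {x y a : G} (hDQ : D ≤ Q) (hB : StdBasis G Q s t D x y)
    (hty : ((t * y * t⁻¹ : G) : G ⧸ centerOf G Q) = x * y) (htQ : t ∉ Q)
    (ha : a ∈ centerOf G Q) (ha1 : a ≠ 1) (hta : t * a * t⁻¹ = a) {d : G} (hd : d ∈ D)
    (htd : t * d * t⁻¹ = d) : d = 1 ∨ d = a ∨ d = x ∨ d = x * a := by
  have hfix : ∀ z ∈ centerOf G Q, t * z * t⁻¹ = z → z = 1 ∨ z = a := fun _ =>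
    hG.eq_one_or_eq_of_conj_eq_self htQ ha ha1 hta
  rcases hG.mk_eq_one_or_eq_of_conj_eq_self hDQ hB hty hd htd with h | h
  · rcases hfix d ((QuotientGroup.eq_one_iff d).mp h) htd with rfl | rfl
    exacts [Or.inl rfl, Or.inr (Or.inl rfl)]
  · have hz : x⁻¹ * d ∈ centerOf G Q := QuotientGroup.eq.mp h.symm
    have htz : t * (x⁻¹ * d) * t⁻¹ = x⁻¹ * d := by
      rw [show t * (x⁻¹ * d) * t⁻¹ = (t * x * t⁻¹)⁻¹ * (t * d * t⁻¹) by group, hB.t_fix, htd]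
    rcases hfix _ hz htz with h1 | h1
    · exact Or.inr (Or.inr (Or.inl (inv_mul_eq_one.mp h1).symm))
    · exact Or.inr (Or.inr (Or.inr (inv_mul_eq_iff_eq_mul.mp h1)))

theorem coe_dent_inf_centralizer [Q.Normal] (hG : IsBiextraspecial G Q m) {s t : G}
    {D : Subgroup G} {x y a : G} (hDQ : D ≤ Q) (hZD : centerOf G Q ≤ D)
    (hB : StdBasis G Q s t D x y) (hty : ((t * y * t⁻¹ : G) : G ⧸ centerOf G Q) = x * y)
    (htQ : t ∉ Q) (ha : a ∈ centerOf G Q) (ha1 : a ≠ 1) (hta : t * a * t⁻¹ = a) :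
    ((D ⊓ (Subgroup.centralizer {t} ⊓ Q) : Subgroup G) : Set G) = {1, a, x, x * a} := by
  have hmem : ∀ d, d ∈ D ⊓ (Subgroup.centralizer {t} ⊓ Q) ↔ d ∈ D ∧ t * d * t⁻¹ = d := by
    simp only [Subgroup.mem_inf, Subgroup.mem_centralizer_singleton_iff_conj_eq]
    exact fun d => ⟨fun h => ⟨h.1, h.2.1⟩, fun h => ⟨h.1, h.2, hDQ h.1⟩⟩
  have haW := (hmem a).mpr ⟨hZD ha, hta⟩
  have hxW := (hmem x).mpr ⟨hB.x_mem, hB.t_fix⟩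
  ext d
  refine ⟨fun hd => ?_, ?_⟩
  · obtain ⟨hd, htd⟩ := (hmem d).mp hd
    exact hG.eq_of_mem_dent_of_conj_eq_self hDQ hB hty htQ ha ha1 hta hd htd
  · rintro (rfl | rfl | rfl | rfl)
    exacts [one_mem _, haW, hxW, mul_mem hxW haW]

theorem mul_self_eq_of_not_isSingularDent (hG : IsBiextraspecial G Q m) {s t : G}
    {D : Subgroup G} {x y a : G} (hos : orderOf s = 3) (hDQ : D ≤ Q)
    (hB : StdBasis G Q s t D x y) (htQ : t ∉ Q) (ha : a ∈ centerOf G Q) (ha1 : a ≠ 1)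
    (hta : t * a * t⁻¹ = a) (hns : ¬IsSingularDent G D) : x * x = a := by
  refine (hG.eq_one_or_eq_of_conj_eq_self htQ ha ha1 hta
    (hG.sq_mem_center x (hDQ hB.x_mem)) ?_).resolve_left
    fun h => hns (hG.isSingularDent_of_mul_self_eq_one hos hDQ hB h)
  rw [show t * (x * x) * t⁻¹ = (t * x * t⁻¹) * (t * x * t⁻¹) by group, hB.t_fix]

end IsBiextraspecial

/-- for a dent `D` with standard basis `{x, y}` (so `xᵗ = x`),
`D ∩ C_Q(t)` has order 4; it equals `⟨a, x⟩ ≅ 2²` if `D` is singular and the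
cyclic group `⟨x⟩` of order 4 if `D` is non-singular. -/
theorem stmt11 (G : Type*) [Group G] (Q L : Subgroup G) (m : ℕ)
    (hG : IsBiextraspecial G Q m) (hL : Q.IsComplement' L)
    (s t : G) (hs : s ∈ L) (ht : t ∈ L) (hos : orderOf s = 3) (hot : orderOf t = 2)
    (a : G) (ha : a ∈ centerOf G Q) (ha1 : a ≠ 1) (hta : t * a * t⁻¹ = a)
    (D : Subgroup G) (x y : G)
    (hD : IsDent G Q D) (hB : StdBasis G Q s t D x y) :
    Nat.card (D ⊓ (Subgroup.centralizer {t} ⊓ Q) : Subgroup G) = 4 ∧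
      (IsSingularDent G D →
        D ⊓ (Subgroup.centralizer {t} ⊓ Q) = Subgroup.closure {a, x}) ∧
      (¬IsSingularDent G D →
        D ⊓ (Subgroup.centralizer {t} ⊓ Q) = Subgroup.closure {x}) := by
  have := hG.normal
  obtain ⟨e⟩ := hG.quot_iso
  have hDQ : D ≤ Q := hD.lt_Q.le
  have htQ : t ∉ Q := fun h => by simp [Subgroup.disjoint_def.mp hL.disjoint h ht] at hot
  have hty := hG.mk_conj_eq_mul hDQ hB (hL.conj_eq_inv_of_quotient_perm_three e hs ht hos hot)
    (hos ▸ pow_orderOf_eq_one s)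
  have hW := hG.coe_dent_inf_centralizer hDQ hD.center_lt.le hB hty htQ ha ha1 hta
  have hWax := Subgroup.eq_closure_pair_of_coe_eq hW
  refine ⟨?_, fun _ => hWax, fun hns => ?_⟩
  · rw [← SetLike.coe_sort_coe, Nat.card_coe_set_eq, hW]
    exact Subgroup.ncard_one_pair_mul_eq_four ha ha1 hB.x_notin
  · rw [hWax, ← hG.mul_self_eq_of_not_isSingularDent hos hDQ hB htQ ha ha1 hta hns,
      Subgroup.closure_mul_self_pair]
end

section
/- Let G = Q:L be a biextraspecial group. Then Z(G) = 1, L is self-normalizing in G, and Out(G) ≅ C_{Aut(G)}(L), the group of automorphisms of G that centralize L. -/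
open scoped commutatorElement

/-- The subgroup of inner automorphisms is normal in `Aut G`. -/
instance innNormal (G : Type*) [Group G] : (MulAut.conj (G := G)).range.Normal := by
  constructor
  rintro n ⟨g, rfl⟩ α
  refine ⟨α g, ?_⟩
  ext x
  simp [MulAut.conj_apply, MulAut.mul_apply, MulAut.inv_def, map_mul, map_inv]

/-- The centraliser `C_{Aut(G)}(L)` of a subgroup `L` in the automorphism group of
`G`: all automorphisms fixing `L` elementwise. -/
def autCentralizer (G : Type*) [Group G] (L : Subgroup G) : Subgroup (MulAut G) where
  carrier := {α : MulAut G | ∀ l ∈ L, α l = l}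
  one_mem' := fun l _ => rfl
  mul_mem' := by
    intro α β hα hβ l hl
    have : (α * β) l = α (β l) := rfl
    rw [this, hβ l hl, hα l hl]
  inv_mem' := by
    intro α hα l hl
    have h1 : α⁻¹ (α l) = l := α.symm_apply_apply l
    rw [hα l hl] at h1
    exact h1

open Subgroup

namespace Equiv.Perm

lemma exists_orderOf_eq_three : ∃ c : Perm (Fin 3), orderOf c = 3 :=
  ⟨finRotate 3, orderOf_eq_prime (by decide) (by decide)⟩

lemma center_fin_three : center (Perm (Fin 3)) = ⊥ := by
  rw [eq_bot_iff_forall]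
  intro x hx
  rw [mem_center_iff] at hx
  revert x
  decide

lemma exists_conj_swap_eq_of_involutive : ∀ u v : Perm (Fin 3),
    u * u = 1 ∧ v * v = 1 ∧ u ≠ 1 ∧ v ≠ 1 ∧ u ≠ v →
      ∃ σ : Perm (Fin 3), σ * swap 0 1 * σ⁻¹ = u ∧ σ * swap 1 2 * σ⁻¹ = v := by
  decide

/-- An automorphism sends the generators `(0 1)`, `(1 2)` to two distinct involutions, and
every such pair is conjugate to the generating pair. -/
lemma conj_surjective_fin_three :
    Function.Surjective (MulAut.conj : Perm (Fin 3) →* MulAut (Perm (Fin 3))) := by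
  intro φ
  have hφ : ∀ a : Perm (Fin 3), a * a = 1 → a ≠ 1 → φ a * φ a = 1 ∧ φ a ≠ 1 :=
    fun a h1 h2 =>
      ⟨by rw [← map_mul, h1, map_one], by rwa [Ne, map_eq_one_iff φ φ.injective]⟩
  obtain ⟨hu, hu1⟩ := hφ (swap 0 1) (by decide) (by decide)
  obtain ⟨hv, hv1⟩ := hφ (swap 1 2) (by decide) (by decide)
  obtain ⟨σ, hσu, hσv⟩ := exists_conj_swap_eq_of_involutive _ _
    ⟨hu, hv, hu1, hv1, φ.injective.ne (by decide)⟩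
  refine ⟨σ, MulEquiv.toMonoidHom_injective
    (MonoidHom.eq_of_eqOn_denseM (mclosure_swap_castSucc_succ 2) ?_)⟩
  rintro _ ⟨i, rfl⟩
  fin_cases i
  · exact hσu
  · exact hσv

end Equiv.Perm

lemma MulAut.conj_surjective_of_mulEquiv {H K : Type*} [Group H] [Group K] (e : H ≃* K)
    (h : Function.Surjective (MulAut.conj : H →* MulAut H)) :
    Function.Surjective (MulAut.conj : K →* MulAut K) := by
  intro φ
  obtain ⟨a, ha⟩ := h ((e.trans φ).trans e.symm)
  refine ⟨e a, MulEquiv.ext fun k => ?_⟩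
  have := congrArg (fun ψ : MulAut H => e (ψ (e.symm k))) ha
  simpa using this

section

variable {G : Type*} [Group G]

namespace Subgroup

lemma commute_of_mem_normalizer_of_disjoint {N H : Subgroup G} [hN : N.Normal]
    (hNH : Disjoint N H) {n h : G} (hn : n ∈ N) (hnH : n ∈ normalizer (H : Set G))
    (hh : h ∈ H) : Commute n h := by
  rw [← commutatorElement_eq_one_iff_commute, commutatorElement_def]
  refine disjoint_def.mp hNH ?_ ?_
  · simpa only [mul_assoc] using mul_mem hn (hN.conj_mem _ (inv_mem hn) h)
  · exact mul_mem ((mem_normalizer_iff.mp hnH h).mp hh) (inv_mem hh)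

lemma IsComplement'.normalizer_le {N L H : Subgroup G} [N.Normal] (hL : N.IsComplement' L)
    (hLH : L ≤ normalizer (H : Set G)) (hNH : Disjoint N H)
    (hNC : Disjoint N (centralizer (H : Set G))) : normalizer (H : Set G) ≤ L := by
  intro x hx
  obtain ⟨⟨⟨n, hn⟩, ⟨l, hl⟩⟩, hnl, -⟩ := hL.existsUnique x
  have hnx : n = x * l⁻¹ := eq_mul_inv_of_mul_eq hnl
  have hnH : n ∈ normalizer (H : Set G) := hnx ▸ mul_mem hx (inv_mem (hLH hl))
  have hn1 : n = 1 := disjoint_def.mp hNC hn <| mem_centralizer_iff.mpr fun h hh =>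
    (commute_of_mem_normalizer_of_disjoint hNH hn hnH hh).symm.eq
  rw [← hnl]
  simpa [hn1] using hl

lemma le_normalizer_of_card_eq_two_mul {H L : Subgroup G} [Finite H] (hHL : H ≤ L)
    (hcard : Nat.card L = 2 * Nat.card H) : L ≤ normalizer (H : Set G) := by
  rw [← normal_subgroupOf_iff_le_normalizer hHL]
  apply normal_of_index_eq_two
  have := index_mul_card (H.subgroupOf L)
  rw [Nat.card_congr (subgroupOfEquivOfLe hHL).toEquiv, hcard] at this
  exact Nat.eq_of_mul_eq_mul_right Nat.card_pos this

lemma exists_conj_zpowers_eq_of_not_sq_dvd [Finite G] {p : ℕ} [hp : Fact p.Prime]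
    (hG : ¬ p ^ 2 ∣ Nat.card G) {s t : G} (hs : orderOf s = p) (ht : orderOf t = p) :
    ∃ g : G, zpowers (g * s * g⁻¹) = zpowers t := by
  have hdvd := fun k => hp.out.pow_dvd_iff_le_factorization (k := k) (Nat.card_pos (α := G)).ne'
  have hfac : p ^ (Nat.card G).factorization p = p := by
    have h1 : 1 ≤ (Nat.card G).factorization p :=
      (hdvd 1).mp (by rw [pow_one, ← hs]; exact _root_.orderOf_dvd_natCard s)
    have h2 : ¬ 2 ≤ (Nat.card G).factorization p := fun h => hG ((hdvd 2).mpr h)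
    rw [show (Nat.card G).factorization p = 1 by omega, pow_one]
  let S : Sylow p G := Sylow.ofCard (zpowers s) (by rw [Nat.card_zpowers, hs, hfac])
  let T : Sylow p G := Sylow.ofCard (zpowers t) (by rw [Nat.card_zpowers, ht, hfac])
  obtain ⟨g, hg⟩ := MulAction.exists_smul_eq G S T
  refine ⟨g, ?_⟩
  have := congrArg (fun P : Sylow p G => (P : Subgroup G)) hg
  simpa [S, T, Sylow.coe_subgroup_smul, pointwise_smul_def, MonoidHom.map_zpowers] using this

end Subgroup

lemma exists_conj_inv_mul_mem_autCentralizer_of_map_eq {L : Subgroup G}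
    (hL : Function.Surjective (MulAut.conj : L →* MulAut L)) {β : MulAut G}
    (hβ : L.map β.toMonoidHom = L) :
    ∃ l ∈ L, (MulAut.conj l)⁻¹ * β ∈ autCentralizer G L := by
  obtain ⟨l, hl⟩ := hL ((β.subgroupMap L).trans (MulEquiv.subgroupCongr hβ))
  refine ⟨l, l.2, fun x hx => ?_⟩
  have hβx : β x = l * x * (l : G)⁻¹ :=
    (congrArg (fun φ : MulAut L => (φ ⟨x, hx⟩ : G)) hl).symm
  rw [MulAut.mul_apply, hβx, ← map_inv, MulAut.conj_apply]
  group

lemma isComplement'_autCentralizer {L : Subgroup G} (hC : centralizer (L : Set G) = ⊥)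
    (hα : ∀ α : MulAut G, ∃ g : G, (MulAut.conj g)⁻¹ * α ∈ autCentralizer G L) :
    (MulAut.conj (G := G)).range.IsComplement' (autCentralizer G L) := by
  refine isComplement'_of_disjoint_and_mul_eq_univ ?_ ?_
  · rw [disjoint_def]
    rintro _ ⟨g, rfl⟩ hg
    have : g ∈ centralizer (L : Set G) := mem_centralizer_iff.mpr fun x hx => by
      have := hg x hx
      rw [MulAut.conj_apply] at this
      exact (mul_inv_eq_iff_eq_mul.mp this).symm
    rw [hC, mem_bot] at this
    rw [this, map_one]
  · refine Set.eq_univ_of_forall fun α => ?_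
    obtain ⟨g, hg⟩ := hα α
    exact ⟨MulAut.conj g, ⟨g, rfl⟩, _, hg, mul_inv_cancel_left _ _⟩

end

namespace IsBiextraspecial

variable {G : Type*} [Group G] {Q L : Subgroup G} {m : ℕ}

lemma nonempty_mulEquiv_perm (hG : IsBiextraspecial G Q m) (hL : Q.IsComplement' L) :
    Nonempty (L ≃* Equiv.Perm (Fin 3)) :=
  have := hG.normal
  hG.quot_iso.map hL.symm.QuotientMulEquiv.symm.trans

lemma card_complement (hG : IsBiextraspecial G Q m) (hL : Q.IsComplement' L) :
    Nat.card L = 6 := by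
  obtain ⟨e⟩ := nonempty_mulEquiv_perm hG hL
  rw [Nat.card_congr e.toEquiv, Nat.card_perm, Nat.card_fin]
  rfl

lemma card_eq (hG : IsBiextraspecial G Q m) (hL : Q.IsComplement' L) :
    Nat.card G = 2 ^ (2 + 2 * m) * 6 := by
  rw [← hL.card_mul_card, hG.card_Q, card_complement hG hL]

lemma finite (hG : IsBiextraspecial G Q m) (hL : Q.IsComplement' L) : Finite G :=
  Nat.finite_of_card_ne_zero (by rw [card_eq hG hL]; positivity)

lemma not_sq_three_dvd_card (hG : IsBiextraspecial G Q m) (hL : Q.IsComplement' L) :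
    ¬ 3 ^ 2 ∣ Nat.card G := by
  rw [card_eq hG hL]
  intro h
  have hcop : Nat.Coprime (3 ^ 2) (2 ^ (2 + 2 * m)) := Nat.Coprime.pow_right _ (by norm_num)
  have := hcop.dvd_of_dvd_mul_left h
  norm_num at this

lemma exists_orderOf_eq_three (hG : IsBiextraspecial G Q m) (hL : Q.IsComplement' L) :
    ∃ t ∈ L, orderOf t = 3 := by
  obtain ⟨e⟩ := nonempty_mulEquiv_perm hG hL
  obtain ⟨c, hc⟩ := Equiv.Perm.exists_orderOf_eq_three
  exact ⟨e.symm c, (e.symm c).2, by rw [Subgroup.orderOf_coe, MulEquiv.orderOf_eq, hc]⟩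

lemma center_le (hG : IsBiextraspecial G Q m) : center G ≤ Q := fun z hz =>
  hG.center_faithful z fun w _ => by rw [← mem_center_iff.mp hz w, mul_inv_cancel_right]

lemma disjoint_centralizer (hG : IsBiextraspecial G Q m) {H : Subgroup G} {t : G} (ht : t ∈ H)
    (hto : orderOf t = 3) : Disjoint Q (centralizer (H : Set G)) :=
  disjoint_def.mpr fun hq hc =>
    hG.order_three_fpf t hto _ hq (by rw [mem_centralizer_iff.mp hc t ht, mul_inv_cancel_right])

theorem center_eq_bot (hG : IsBiextraspecial G Q m) (hL : Q.IsComplement' L) :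
    center G = ⊥ := by
  obtain ⟨t, ht, hto⟩ := exists_orderOf_eq_three hG hL
  exact le_bot_iff.mp (disjoint_centralizer hG ht hto (center_le hG) (center_le_centralizer _))

theorem normalizer_eq (hG : IsBiextraspecial G Q m) (hL : Q.IsComplement' L) :
    normalizer (L : Set G) = L := by
  have := hG.normal
  obtain ⟨t, ht, hto⟩ := exists_orderOf_eq_three hG hL
  exact le_antisymm
    (hL.normalizer_le le_normalizer hL.disjoint (disjoint_centralizer hG ht hto)) le_normalizer

theorem centralizer_eq_bot (hG : IsBiextraspecial G Q m) (hL : Q.IsComplement' L) :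
    centralizer (L : Set G) = ⊥ := by
  obtain ⟨e⟩ := nonempty_mulEquiv_perm hG hL
  rw [eq_bot_iff_forall]
  intro g hg
  have hgL : g ∈ L := normalizer_eq hG hL ▸ centralizer_le_normalizer _ hg
  have hcen : e ⟨g, hgL⟩ ∈ center (Equiv.Perm (Fin 3)) := mem_center_iff.mpr fun y => by
    obtain ⟨x, rfl⟩ := e.surjective y
    rw [← map_mul, ← map_mul]
    exact congrArg e (Subtype.ext (mem_centralizer_iff.mp hg x x.2))
  rw [Equiv.Perm.center_fin_three, mem_bot, map_eq_one_iff e e.injective] at hcen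
  exact congrArg Subtype.val hcen

theorem normalizer_zpowers_eq (hG : IsBiextraspecial G Q m) (hL : Q.IsComplement' L) {t : G}
    (ht : t ∈ L) (hto : orderOf t = 3) : normalizer (zpowers t : Set G) = L := by
  have := hG.normal
  have := finite hG hL
  have hLN : L ≤ normalizer (zpowers t : Set G) :=
    le_normalizer_of_card_eq_two_mul (zpowers_le.mpr ht)
      (by rw [card_complement hG hL, Nat.card_zpowers, hto])
  have hQt : Disjoint Q (zpowers t) := disjoint_of_coprime_natCard <| by
    rw [hG.card_Q, Nat.card_zpowers, hto]
    exact Nat.Coprime.pow_left _ (by norm_num)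
  exact le_antisymm (hL.normalizer_le hLN hQt (disjoint_centralizer hG (mem_zpowers t) hto)) hLN

theorem exists_conj_inv_mul_mem_autCentralizer (hG : IsBiextraspecial G Q m)
    (hL : Q.IsComplement' L) (α : MulAut G) :
    ∃ g : G, (MulAut.conj g)⁻¹ * α ∈ autCentralizer G L := by
  have := finite hG hL
  have : Fact (Nat.Prime 3) := ⟨Nat.prime_three⟩
  obtain ⟨e⟩ := nonempty_mulEquiv_perm hG hL
  obtain ⟨t, ht, hto⟩ := exists_orderOf_eq_three hG hL
  obtain ⟨g, hg⟩ := exists_conj_zpowers_eq_of_not_sq_dvd (s := α t)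
    (not_sq_three_dvd_card hG hL) (by rwa [MulEquiv.orderOf_eq]) hto
  have hL' : L.map (MulAut.conj g * α).toMonoidHom = L := by
    rw [← normalizer_zpowers_eq hG hL ht hto, map_equiv_normalizer_eq, MonoidHom.map_zpowers]
    exact congrArg (fun H : Subgroup G => normalizer (H : Set G)) hg
  obtain ⟨l, -, hl⟩ := exists_conj_inv_mul_mem_autCentralizer_of_map_eq
    (MulAut.conj_surjective_of_mulEquiv e.symm Equiv.Perm.conj_surjective_fin_three) hL'
  refine ⟨g⁻¹ * l, ?_⟩
  simpa [mul_assoc] using hl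

end IsBiextraspecial

/-- for a biextraspecial group `G = Q:L` one has `Z(G) = 1`, `L` is
self-normalising, and `Out(G) = Aut(G)/Inn(G)` is isomorphic to the group
`C_{Aut(G)}(L)` of automorphisms of `G` centralising `L`. -/
theorem stmt17 (G : Type*) [Group G] (Q L : Subgroup G) (m : ℕ)
    (hG : IsBiextraspecial G Q m) (hL : Q.IsComplement' L) :
    Subgroup.center G = ⊥ ∧
      Subgroup.normalizer (L : Set G) = L ∧
      Nonempty ((MulAut G ⧸ (MulAut.conj (G := G)).range) ≃* autCentralizer G L) :=
  ⟨hG.center_eq_bot hL, hG.normalizer_eq hL,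
    ⟨(isComplement'_autCentralizer (hG.centralizer_eq_bot hL)
      (hG.exists_conj_inv_mul_mem_autCentralizer hL)).symm.QuotientMulEquiv⟩⟩
end
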